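/- arXiv:1908.01850 — 2 statements merged into one kernel-verified Lean document; each statement's English description precedes it below -/
import Mathlib

section
/- Let H₁ and H₂ be complex Hilbert spaces and let V = [[0, B₁, 0],[0, D₁, D₂],[C₂, 0, D₄]] be an isometric colligation on ℂ ⊕ (H₁ ⊕ H₂). Suppose X : ℂ → H₁ is an isometry and Y : H₂ → ℂ is a bounded operator such that X*D₁ = 0 and D₂ = XY. Then V₁ = [[0, B₁],[X, D₁]] is an isometric colligation on ℂ ⊕ H₁, V₂ = [[0, Y],[C₂, D₄]] is an isometric colligation on ℂ ⊕ H₂, and τ_V(z) = τ_{V₁}(z) · τ_{V₂}(z) for all z ∈ 𝔻. -/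
open ContinuousLinearMap Metric

noncomputable section

/-- One-variable Schur class: analytic on the open unit disc, bounded by one. -/
def SchurClass (f : ℂ → ℂ) : Prop :=
  AnalyticOnNhd ℂ f (ball 0 1) ∧ ∀ z ∈ ball (0 : ℂ) 1, ‖f z‖ ≤ 1

/-- The open unit bidisc as a subset of `ℂ × ℂ`. -/
def biDisc : Set (ℂ × ℂ) := (ball 0 1) ×ˢ (ball 0 1)

/-- Two-variable Schur class. -/
def SchurClass2 (f : ℂ × ℂ → ℂ) : Prop :=
  AnalyticOnNhd ℂ f biDisc ∧ ∀ z ∈ biDisc, ‖f z‖ ≤ 1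

/-- The open unit polydisc in `ℂⁿ`. -/
def polyDisc (n : ℕ) : Set (Fin n → ℂ) := {z | ∀ i, ‖z i‖ < 1}

variable {H : Type*} [NormedAddCommGroup H] [InnerProductSpace ℂ H]

/-- `V = [[a, B], [C, D]]` on `ℂ ⊕ H` is an isometric colligation, i.e. `V*V = I`,
expressed as preservation of inner products in the Hilbertian direct sum `ℂ ⊕ H`. -/
def IsIsometricColligation (a : ℂ) (B : H →L[ℂ] ℂ) (C : ℂ →L[ℂ] H) (D : H →L[ℂ] H) : Prop :=
  ∀ (z w : ℂ) (h k : H),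
    (starRingEnd ℂ) (a * z + B h) * (a * w + B k) + (inner ℂ (C z + D h) (C w + D k) : ℂ) =
      (starRingEnd ℂ) z * w + (inner ℂ h k : ℂ)

/-- One-variable transfer function `τ_V(z) = a + z B (I - z D)⁻¹ C`. -/
def transfer1 (a : ℂ) (B : H →L[ℂ] ℂ) (C : ℂ →L[ℂ] H) (D : H →L[ℂ] H) (z : ℂ) : ℂ :=
  a + z * B (Ring.inverse (1 - z • D) (C 1))

section Pair

variable {H₁ H₂ K₁ K₂ : Type*}
  [NormedAddCommGroup H₁] [InnerProductSpace ℂ H₁]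
  [NormedAddCommGroup H₂] [InnerProductSpace ℂ H₂]
  [NormedAddCommGroup K₁] [InnerProductSpace ℂ K₁]
  [NormedAddCommGroup K₂] [InnerProductSpace ℂ K₂]

/-- Row operator `[B₁, B₂] : H₁ ⊕ H₂ → ℂ`. -/
def rowB (B₁ : H₁ →L[ℂ] ℂ) (B₂ : H₂ →L[ℂ] ℂ) : WithLp 2 (H₁ × H₂) →L[ℂ] ℂ :=
  (B₁.comp (fst ℂ H₁ H₂) + B₂.comp (snd ℂ H₁ H₂)).comp
    (WithLp.prodContinuousLinearEquiv 2 ℂ H₁ H₂).toContinuousLinearMap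

/-- Column operator `[C₁; C₂] : ℂ → H₁ ⊕ H₂`. -/
def colC (C₁ : ℂ →L[ℂ] H₁) (C₂ : ℂ →L[ℂ] H₂) : ℂ →L[ℂ] WithLp 2 (H₁ × H₂) :=
  ((WithLp.prodContinuousLinearEquiv 2 ℂ H₁ H₂).symm.toContinuousLinearMap).comp (C₁.prod C₂)

/-- Block operator `[[D₁₁, D₁₂], [D₂₁, D₂₂]] : K₁ ⊕ K₂ → H₁ ⊕ H₂`. -/
def blockD (D₁₁ : K₁ →L[ℂ] H₁) (D₁₂ : K₂ →L[ℂ] H₁) (D₂₁ : K₁ →L[ℂ] H₂) (D₂₂ : K₂ →L[ℂ] H₂) :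
    WithLp 2 (K₁ × K₂) →L[ℂ] WithLp 2 (H₁ × H₂) :=
  ((WithLp.prodContinuousLinearEquiv 2 ℂ H₁ H₂).symm.toContinuousLinearMap).comp
    ((((D₁₁.comp (fst ℂ K₁ K₂) + D₁₂.comp (snd ℂ K₁ K₂))).prod
        (D₂₁.comp (fst ℂ K₁ K₂) + D₂₂.comp (snd ℂ K₁ K₂))).comp
      (WithLp.prodContinuousLinearEquiv 2 ℂ K₁ K₂).toContinuousLinearMap)

/-- The diagonal operator `E(z) = z₁ I_{H₁} ⊕ z₂ I_{H₂}` on `H₁ ⊕ H₂`. -/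
def diag2 (z : ℂ × ℂ) : WithLp 2 (H₁ × H₂) →L[ℂ] WithLp 2 (H₁ × H₂) :=
  blockD (z.1 • ContinuousLinearMap.id ℂ H₁) 0 0 (z.2 • ContinuousLinearMap.id ℂ H₂)

/-- Two-variable transfer function `τ_V(z) = a + B (I - E(z) D)⁻¹ E(z) C` on `ℂ ⊕ (H₁ ⊕ H₂)`. -/
def transfer2 (a : ℂ) (B : WithLp 2 (H₁ × H₂) →L[ℂ] ℂ) (C : ℂ →L[ℂ] WithLp 2 (H₁ × H₂))
    (D : WithLp 2 (H₁ × H₂) →L[ℂ] WithLp 2 (H₁ × H₂)) (z : ℂ × ℂ) : ℂ :=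
  a + B (Ring.inverse (1 - (diag2 z).comp D) (diag2 z (C 1)))

end Pair

section Fam

variable {n m k : ℕ} {K : Fin n → Type*} {M : Fin m → Type*} {N : Fin k → Type*}
  [∀ i, NormedAddCommGroup (K i)] [∀ i, InnerProductSpace ℂ (K i)]
  [∀ i, NormedAddCommGroup (M i)] [∀ i, InnerProductSpace ℂ (M i)]
  [∀ i, NormedAddCommGroup (N i)] [∀ i, InnerProductSpace ℂ (N i)]

/-- Row operator `[B₁, …, Bₙ] : ⊕ᵢ Kᵢ → ℂ`. -/
def rowN (B : ∀ i, K i →L[ℂ] ℂ) : PiLp 2 K →L[ℂ] ℂ :=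
  ∑ i, (B i).comp ((ContinuousLinearMap.proj i).comp
    (PiLp.continuousLinearEquiv 2 ℂ K).toContinuousLinearMap)

/-- Column operator `[C₁; …; Cₙ] : ℂ → ⊕ᵢ Kᵢ`. -/
def colN (C : ∀ i, ℂ →L[ℂ] K i) : ℂ →L[ℂ] PiLp 2 K :=
  ((PiLp.continuousLinearEquiv 2 ℂ K).symm.toContinuousLinearMap).comp
    (ContinuousLinearMap.pi C)

/-- Rectangular block-matrix operator `[Dᵢⱼ] : ⊕ⱼ Nⱼ → ⊕ᵢ Mᵢ` (also used for square ones). -/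
def matR (D : ∀ (i : Fin m) (j : Fin k), N j →L[ℂ] M i) : PiLp 2 N →L[ℂ] PiLp 2 M :=
  ((PiLp.continuousLinearEquiv 2 ℂ M).symm.toContinuousLinearMap).comp
    ((ContinuousLinearMap.pi fun i => ∑ j, (D i j).comp (ContinuousLinearMap.proj j)).comp
      (PiLp.continuousLinearEquiv 2 ℂ N).toContinuousLinearMap)

/-- The diagonal operator `E(z) = z₁ I_{K₁} ⊕ ⋯ ⊕ zₙ I_{Kₙ}` on `⊕ᵢ Kᵢ`. -/
def diagN (z : Fin n → ℂ) : PiLp 2 K →L[ℂ] PiLp 2 K :=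
  ((PiLp.continuousLinearEquiv 2 ℂ K).symm.toContinuousLinearMap).comp
    ((ContinuousLinearMap.pi fun i => z i • ContinuousLinearMap.proj i).comp
      (PiLp.continuousLinearEquiv 2 ℂ K).toContinuousLinearMap)

/-- `n`-variable transfer function `τ_V(z) = a + B (I - E(z) D)⁻¹ E(z) C` on `ℂ ⊕ (⊕ᵢ Kᵢ)`. -/
def transferN (a : ℂ) (B : PiLp 2 K →L[ℂ] ℂ) (C : ℂ →L[ℂ] PiLp 2 K)
    (D : PiLp 2 K →L[ℂ] PiLp 2 K) (z : Fin n → ℂ) : ℂ :=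
  a + B (Ring.inverse (1 - (diagN z).comp D) (diagN z (C 1)))

/-- Transfer function of a colligation on `ℂ ⊕ ((⊕ᵢ₌₁ᵐ Mᵢ) ⊕ (⊕ⱼ₌₁ᵏ Nⱼ))` in the `m + k`
variables `(z₁, z₂) ∈ 𝔻^m × 𝔻^k`, where `E(z₁, z₂) = (⊕ᵢ z₁ᵢ I_{Mᵢ}) ⊕ (⊕ⱼ z₂ⱼ I_{Nⱼ})`. -/
def transferSplit (a : ℂ) (B : WithLp 2 (PiLp 2 M × PiLp 2 N) →L[ℂ] ℂ)
    (C : ℂ →L[ℂ] WithLp 2 (PiLp 2 M × PiLp 2 N))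
    (D : WithLp 2 (PiLp 2 M × PiLp 2 N) →L[ℂ] WithLp 2 (PiLp 2 M × PiLp 2 N))
    (z₁ : Fin m → ℂ) (z₂ : Fin k → ℂ) : ℂ :=
  a + B (Ring.inverse (1 - (blockD (diagN z₁) 0 0 (diagN z₂)).comp D)
    (blockD (diagN z₁) 0 0 (diagN z₂) (C 1)))

end Fam

set_option maxHeartbeats 1000000

private lemma aux_ringInverse_apply_apply {E : Type*} [NormedAddCommGroup E] [NormedSpace ℂ E]
    (A : E →L[ℂ] E) (hA : IsUnit A) (x : E) : Ring.inverse A (A x) = x := by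
  have := congrArg (fun T : E →L[ℂ] E => T x) (Ring.inverse_mul_cancel A hA)
  simpa [ContinuousLinearMap.mul_apply] using this

private lemma aux_apply_ringInverse_apply {E : Type*} [NormedAddCommGroup E] [NormedSpace ℂ E]
    (A : E →L[ℂ] E) (hA : IsUnit A) (x : E) : A (Ring.inverse A x) = x := by
  have := congrArg (fun T : E →L[ℂ] E => T x) (Ring.mul_inverse_cancel A hA)
  simpa [ContinuousLinearMap.mul_apply] using this

private lemma aux_isUnit_one_sub {E : Type*} [NormedAddCommGroup E] [NormedSpace ℂ E]
    [CompleteSpace E] (A : E →L[ℂ] E) (hA : ‖A‖ < 1) : IsUnit (1 - A) :=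
  ⟨Units.oneSub A hA, rfl⟩

/-- Case (ii) in Section 4 of the paper, converse direction. Let
`V = [[0, B₁, 0],[0, D₁, D₂],[C₂, 0, D₄]]` be an isometric colligation on `ℂ ⊕ (H₁ ⊕ H₂)`,
let `X : ℂ → H₁` be an isometry and `Y : H₂ → ℂ` a bounded operator with `X*D₁ = 0` and
`D₂ = XY`. Then `V₁ = [[0, B₁],[X, D₁]]` and `V₂ = [[0, Y],[C₂, D₄]]` are isometric
colligations and `τ_V = τ_{V₁} τ_{V₂}` on `𝔻`. -/
theorem doubly_vanishing_colligation_factors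
    {H₁ H₂ : Type*}
    [NormedAddCommGroup H₁] [InnerProductSpace ℂ H₁] [CompleteSpace H₁]
    [NormedAddCommGroup H₂] [InnerProductSpace ℂ H₂] [CompleteSpace H₂]
    (B₁ : H₁ →L[ℂ] ℂ) (C₂ : ℂ →L[ℂ] H₂)
    (D₁ : H₁ →L[ℂ] H₁) (D₂ : H₂ →L[ℂ] H₁) (D₄ : H₂ →L[ℂ] H₂)
    (X : ℂ →L[ℂ] H₁) (Y : H₂ →L[ℂ] ℂ)
    (hV : IsIsometricColligation 0 (rowB B₁ 0) (colC 0 C₂) (blockD D₁ D₂ 0 D₄))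
    (hX : Isometry X)
    (hXD₁ : (ContinuousLinearMap.adjoint X) ∘L D₁ = 0)
    (hD₂ : D₂ = X ∘L Y) :
    IsIsometricColligation 0 B₁ X D₁ ∧
      IsIsometricColligation 0 Y C₂ D₄ ∧
      ∀ z ∈ ball (0 : ℂ) 1,
        transfer1 0 (rowB B₁ 0) (colC 0 C₂) (blockD D₁ D₂ 0 D₄) z =
          transfer1 0 B₁ X D₁ z * transfer1 0 Y C₂ D₄ z := by
  classical
  -- application lemmas for the block operators
  have hrow : ∀ h : WithLp 2 (H₁ × H₂), rowB B₁ 0 h = B₁ h.fst := fun h => by simp [rowB]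
  have hcol1 : ∀ z : ℂ, (colC (0 : ℂ →L[ℂ] H₁) C₂ z).fst = 0 := fun z => by simp [colC]
  have hcol2 : ∀ z : ℂ, (colC (0 : ℂ →L[ℂ] H₁) C₂ z).snd = C₂ z := fun z => by simp [colC]
  have hblk1 : ∀ h : WithLp 2 (H₁ × H₂), (blockD D₁ D₂ 0 D₄ h).fst = D₁ h.fst + D₂ h.snd :=
    fun h => by simp [blockD]
  have hblk2 : ∀ h : WithLp 2 (H₁ × H₂), (blockD D₁ D₂ 0 D₄ h).snd = D₄ h.snd :=
    fun h => by simp [blockD]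
  have hadd1 : ∀ x y : WithLp 2 (H₁ × H₂), (x + y).fst = x.fst + y.fst := fun _ _ => rfl
  have hadd2 : ∀ x y : WithLp 2 (H₁ × H₂), (x + y).snd = x.snd + y.snd := fun _ _ => rfl
  -- inner products with X
  have hXn : ∀ z : ℂ, ‖X z‖ = ‖z‖ := (AddMonoidHomClass.isometry_iff_norm X).mp hX
  have hX' : ∀ z w : ℂ, (inner ℂ (X z) (X w) : ℂ) = (starRingEnd ℂ) z * w := by
    intro z w
    have := (LinearIsometry.mk (X : ℂ →ₗ[ℂ] H₁) hXn).inner_map_map z w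
    simpa [RCLike.inner_apply, mul_comm] using this
  have hXD : ∀ (z : ℂ) (h : H₁), (inner ℂ (X z) (D₁ h) : ℂ) = 0 := by
    intro z h
    rw [← ContinuousLinearMap.adjoint_inner_right]
    have : (ContinuousLinearMap.adjoint X) (D₁ h) = 0 := by
      have := congrArg (fun T : H₁ →L[ℂ] ℂ => T h) hXD₁
      simpa using this
    simp [this]
  have hDX : ∀ (z : ℂ) (h : H₁), (inner ℂ (D₁ h) (X z) : ℂ) = 0 := by
    intro z h
    rw [← inner_conj_symm, hXD, map_zero]
  -- componentwise form of hV
  have hV' : ∀ (z w : ℂ) (h₁ k₁ : H₁) (h₂ k₂ : H₂),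
      (starRingEnd ℂ) (B₁ h₁) * B₁ k₁ +
        ((inner ℂ (D₁ h₁ + D₂ h₂) (D₁ k₁ + D₂ k₂) : ℂ) +
          (inner ℂ (C₂ z + D₄ h₂) (C₂ w + D₄ k₂) : ℂ)) =
        (starRingEnd ℂ) z * w + ((inner ℂ h₁ k₁ : ℂ) + (inner ℂ h₂ k₂ : ℂ)) := by
    intro z w h₁ k₁ h₂ k₂
    have := hV z w ((WithLp.equiv 2 (H₁ × H₂)).symm (h₁, h₂))
      ((WithLp.equiv 2 (H₁ × H₂)).symm (k₁, k₂))
    simp [hrow, WithLp.prod_inner_apply, hadd1, hadd2, hcol1, hcol2, hblk1, hblk2,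
      inner_add_left, inner_add_right] at this ⊢
    linear_combination this
  have part1 : IsIsometricColligation 0 B₁ X D₁ := by
    intro z w h k
    have key := hV' 0 0 h k 0 0
    simp only [map_zero, add_zero, zero_add, inner_zero_left, inner_zero_right, mul_zero,
      zero_mul] at key
    simp only [zero_mul, zero_add]
    simp only [inner_add_left, inner_add_right, hX', hXD, hDX, add_zero, zero_add]
    linear_combination key
  have part2 : IsIsometricColligation 0 Y C₂ D₄ := by
    intro z w h k
    have key := hV' z w 0 0 h k
    simp only [map_zero, zero_add, add_zero, zero_mul, mul_zero, inner_zero_left,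
      inner_zero_right] at key
    rw [hD₂] at key
    simp only [ContinuousLinearMap.comp_apply, hX', RCLike.inner_apply] at key ⊢
    simp only [zero_mul, zero_add]
    linear_combination key
  refine ⟨part1, part2, ?_⟩
  -- norm bounds
  have nB : ‖blockD D₁ D₂ 0 D₄‖ ≤ 1 := by
    refine ContinuousLinearMap.opNorm_le_bound _ zero_le_one (fun h => ?_)
    have key := hV 0 0 h h
    simp only [mul_zero, zero_add, map_zero, zero_mul, add_zero, zero_mul,
      inner_self_eq_norm_sq_to_K, RCLike.conj_mul] at key
    have key2 : ‖rowB B₁ 0 h‖ ^ 2 + ‖blockD D₁ D₂ 0 D₄ h‖ ^ 2 = ‖h‖ ^ 2 := by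
      exact_mod_cast key
    nlinarith [norm_nonneg (blockD D₁ D₂ 0 D₄ h), norm_nonneg h, norm_nonneg (rowB B₁ 0 h)]
  have nD₁ : ‖D₁‖ ≤ 1 := by
    refine ContinuousLinearMap.opNorm_le_bound _ zero_le_one (fun h => ?_)
    have key := part1 0 0 h h
    simp only [mul_zero, zero_add, map_zero, zero_mul, add_zero,
      inner_self_eq_norm_sq_to_K, RCLike.conj_mul] at key
    have key2 : ‖B₁ h‖ ^ 2 + ‖D₁ h‖ ^ 2 = ‖h‖ ^ 2 := by
      exact_mod_cast key
    nlinarith [norm_nonneg (D₁ h), norm_nonneg h, norm_nonneg (B₁ h)]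
  have nD₄ : ‖D₄‖ ≤ 1 := by
    refine ContinuousLinearMap.opNorm_le_bound _ zero_le_one (fun h => ?_)
    have key := part2 0 0 h h
    simp only [mul_zero, zero_add, map_zero, zero_mul, add_zero,
      inner_self_eq_norm_sq_to_K, RCLike.conj_mul] at key
    have key2 : ‖Y h‖ ^ 2 + ‖D₄ h‖ ^ 2 = ‖h‖ ^ 2 := by
      exact_mod_cast key
    nlinarith [norm_nonneg (D₄ h), norm_nonneg h, norm_nonneg (Y h)]
  intro z hz
  simp only [mem_ball, dist_zero_right] at hz
  have hAB : IsUnit (1 - z • blockD D₁ D₂ 0 D₄) :=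
    aux_isUnit_one_sub _ (lt_of_le_of_lt (ContinuousLinearMap.opNorm_smul_le _ _) (by
      nlinarith [norm_nonneg z, norm_nonneg (blockD D₁ D₂ 0 D₄)]))
  have hA₁ : IsUnit (1 - z • D₁) :=
    aux_isUnit_one_sub _ (lt_of_le_of_lt (ContinuousLinearMap.opNorm_smul_le _ _) (by
      nlinarith [norm_nonneg z, norm_nonneg D₁]))
  have hA₄ : IsUnit (1 - z • D₄) :=
    aux_isUnit_one_sub _ (lt_of_le_of_lt (ContinuousLinearMap.opNorm_smul_le _ _) (by
      nlinarith [norm_nonneg z, norm_nonneg D₄]))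
  set u₂ : H₂ := Ring.inverse (1 - z • D₄) (C₂ 1) with hu₂
  set u₁ : H₁ := z • Ring.inverse (1 - z • D₁) (D₂ u₂) with hu₁
  set u : WithLp 2 (H₁ × H₂) := (WithLp.equiv 2 (H₁ × H₂)).symm (u₁, u₂) with hu
  have hu1 : u.fst = u₁ := rfl
  have hu2 : u.snd = u₂ := rfl
  have hA₄u₂ : (1 - z • D₄) u₂ = C₂ 1 := aux_apply_ringInverse_apply _ hA₄ _
  have hAu : (1 - z • blockD D₁ D₂ 0 D₄) u = colC 0 C₂ 1 := by
    apply (WithLp.equiv 2 (H₁ × H₂)).injective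
    apply Prod.ext
    · show ((1 - z • blockD D₁ D₂ 0 D₄) u).fst = (colC (0 : ℂ →L[ℂ] H₁) C₂ 1).fst
      have e1 : ((1 - z • blockD D₁ D₂ 0 D₄) u).fst = u₁ - z • (D₁ u₁ + D₂ u₂) := by
        simp only [ContinuousLinearMap.sub_apply, ContinuousLinearMap.smul_apply,
          ContinuousLinearMap.one_apply]
        rw [show ((u - z • blockD D₁ D₂ 0 D₄ u) : WithLp 2 (H₁ × H₂)).fst
            = u.fst - z • (blockD D₁ D₂ 0 D₄ u).fst from rfl, hblk1, hu1, hu2]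
      rw [e1, hcol1]
      have hA₁D : (1 - z • D₁) (Ring.inverse (1 - z • D₁) (D₂ u₂)) = D₂ u₂ :=
        aux_apply_ringInverse_apply _ hA₁ _
      simp only [ContinuousLinearMap.sub_apply, ContinuousLinearMap.smul_apply,
        ContinuousLinearMap.one_apply] at hA₁D
      rw [hu₁, map_smul]
      calc z • (Ring.inverse (1 - z • D₁)) (D₂ u₂) -
            z • (z • D₁ ((Ring.inverse (1 - z • D₁)) (D₂ u₂)) + D₂ u₂)
          = z • ((Ring.inverse (1 - z • D₁)) (D₂ u₂) -
              z • D₁ ((Ring.inverse (1 - z • D₁)) (D₂ u₂)) - D₂ u₂) := by module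
        _ = 0 := by rw [hA₁D]; simp
    · show ((1 - z • blockD D₁ D₂ 0 D₄) u).snd = (colC (0 : ℂ →L[ℂ] H₁) C₂ 1).snd
      have e2 : ((1 - z • blockD D₁ D₂ 0 D₄) u).snd = u₂ - z • D₄ u₂ := by
        simp only [ContinuousLinearMap.sub_apply, ContinuousLinearMap.smul_apply,
          ContinuousLinearMap.one_apply]
        rw [show ((u - z • blockD D₁ D₂ 0 D₄ u) : WithLp 2 (H₁ × H₂)).snd
            = u.snd - z • (blockD D₁ D₂ 0 D₄ u).snd from rfl, hblk2, hu2]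
      rw [e2, hcol2]
      have := hA₄u₂
      simp only [ContinuousLinearMap.sub_apply, ContinuousLinearMap.smul_apply,
        ContinuousLinearMap.one_apply] at this
      exact this
  have hinv : Ring.inverse (1 - z • blockD D₁ D₂ 0 D₄) (colC 0 C₂ 1) = u := by
    rw [← hAu, aux_ringInverse_apply_apply _ hAB]
  simp only [transfer1, zero_add]
  rw [hinv, hrow, hu1, hu₁]
  have hD₂u : D₂ u₂ = Y u₂ • X 1 := by
    rw [hD₂, ContinuousLinearMap.comp_apply, ← map_smul, smul_eq_mul, mul_one]
  rw [hD₂u, map_smul, map_smul, map_smul]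
  simp only [smul_eq_mul, ← hu₂]
  ring
end
end

section
/- Let α, β ∈ 𝔻. The 3×3 matrix V = [[αβ, √(1−|α|²), −α√(1−|β|²)],[−β√(1−|α|²), ᾱ, √(1−|α|²)√(1−|β|²)],[√(1−|β|²), 0, β̄]], regarded as a colligation on ℂ ⊕ (ℂ ⊕ ℂ), is an isometry, and its two-variable transfer function satisfies τ_V(z₁, z₂) = b_α(z₁) · b_β(z₂) for all (z₁, z₂) ∈ 𝔻², where b_λ(z) = (z − λ)/(1 − λ̄z). -/
open ContinuousLinearMap Metric

noncomputable section

variable {H : Type*} [NormedAddCommGroup H] [InnerProductSpace ℂ H]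

set_option maxHeartbeats 1000000

lemma myinv {R : Type*} [MonoidWithZero R] (a b : R) (h1 : a*b=1) (h2 : b*a=1) :
    Ring.inverse a = b := by
  have := Ring.inverse_unit ⟨a,b,h1,h2⟩
  simpa using this

lemma nz (α z : ℂ) (hα : ‖α‖ < 1) (hz : ‖z‖ < 1) : 1 - (starRingEnd ℂ) α * z ≠ 0 := by
  intro h
  have h2 : ‖(starRingEnd ℂ) α * z‖ < 1 := by
    rw [norm_mul, RCLike.norm_conj]
    nlinarith [norm_nonneg α, norm_nonneg z]
  have h1 : (starRingEnd ℂ) α * z = 1 := by linear_combination -h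
  rw [h1] at h2; simp at h2


/-- Example 2, Subsection 5.2 of the paper. For `α, β ∈ 𝔻`, the `3×3`
matrix `V = [[αβ, √(1-|α|²), -α√(1-|β|²)],[-β√(1-|α|²), ᾱ, √(1-|α|²)√(1-|β|²)],`
`[√(1-|β|²), 0, β̄]]`, as a colligation on `ℂ ⊕ (ℂ ⊕ ℂ)`, is an isometry and its two-variable
transfer function is `b_α(z₁) b_β(z₂)` on `𝔻²`. -/
theorem blaschke_product_colligation (α β : ℂ) (hα : ‖α‖ < 1) (hβ : ‖β‖ < 1) :
    IsIsometricColligation (α * β)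
        (rowB (((Real.sqrt (1 - ‖α‖ ^ 2) : ℝ) : ℂ) • ContinuousLinearMap.id ℂ ℂ)
              ((-α * ((Real.sqrt (1 - ‖β‖ ^ 2) : ℝ) : ℂ)) • ContinuousLinearMap.id ℂ ℂ))
        (colC ((-β * ((Real.sqrt (1 - ‖α‖ ^ 2) : ℝ) : ℂ)) • ContinuousLinearMap.id ℂ ℂ)
              (((Real.sqrt (1 - ‖β‖ ^ 2) : ℝ) : ℂ) • ContinuousLinearMap.id ℂ ℂ))
        (blockD (((starRingEnd ℂ) α) • ContinuousLinearMap.id ℂ ℂ)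
                ((((Real.sqrt (1 - ‖α‖ ^ 2) * Real.sqrt (1 - ‖β‖ ^ 2) : ℝ)) : ℂ) •
                  ContinuousLinearMap.id ℂ ℂ)
                0
                (((starRingEnd ℂ) β) • ContinuousLinearMap.id ℂ ℂ)) ∧
      ∀ z ∈ biDisc,
        transfer2 (α * β)
            (rowB (((Real.sqrt (1 - ‖α‖ ^ 2) : ℝ) : ℂ) • ContinuousLinearMap.id ℂ ℂ)
                  ((-α * ((Real.sqrt (1 - ‖β‖ ^ 2) : ℝ) : ℂ)) • ContinuousLinearMap.id ℂ ℂ))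
            (colC ((-β * ((Real.sqrt (1 - ‖α‖ ^ 2) : ℝ) : ℂ)) • ContinuousLinearMap.id ℂ ℂ)
                  (((Real.sqrt (1 - ‖β‖ ^ 2) : ℝ) : ℂ) • ContinuousLinearMap.id ℂ ℂ))
            (blockD (((starRingEnd ℂ) α) • ContinuousLinearMap.id ℂ ℂ)
                    ((((Real.sqrt (1 - ‖α‖ ^ 2) * Real.sqrt (1 - ‖β‖ ^ 2) : ℝ)) : ℂ) •
                      ContinuousLinearMap.id ℂ ℂ)
                    0
                    (((starRingEnd ℂ) β) • ContinuousLinearMap.id ℂ ℂ)) z =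
          ((z.1 - α) / (1 - (starRingEnd ℂ) α * z.1)) *
            ((z.2 - β) / (1 - (starRingEnd ℂ) β * z.2)) := by
  constructor
  · intro z w h k
    set sa : ℂ := ((Real.sqrt (1 - ‖α‖ ^ 2) : ℝ) : ℂ) with hsa_def
    set sb : ℂ := ((Real.sqrt (1 - ‖β‖ ^ 2) : ℝ) : ℂ) with hsb_def
    have hsa : sa * sa = 1 - (starRingEnd ℂ) α * α := by
      rw [hsa_def, ← Complex.ofReal_mul, Real.mul_self_sqrt (by nlinarith [norm_nonneg α]),
        Complex.conj_mul']; push_cast; ring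
    have hsb : sb * sb = 1 - (starRingEnd ℂ) β * β := by
      rw [hsb_def, ← Complex.ofReal_mul, Real.mul_self_sqrt (by nlinarith [norm_nonneg β]),
        Complex.conj_mul']; push_cast; ring
    have hcsa : (starRingEnd ℂ) sa = sa := Complex.conj_ofReal _
    have hcsb : (starRingEnd ℂ) sb = sb := Complex.conj_ofReal _
    simp only [rowB, colC, blockD, smul_comp, id_comp, coe_comp', ContinuousLinearEquiv.coe_coe,
      WithLp.prodContinuousLinearEquiv_symm_apply, WithLp.prodContinuousLinearEquiv_apply,
      Function.comp_apply, prod_apply, add_apply, coe_smul', coe_fst', Pi.smul_apply,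
      smul_eq_mul, coe_snd', coe_id', Pi.zero_apply,
      zero_apply, id_eq, Complex.ofReal_mul, WithLp.prod_inner_apply, RCLike.inner_apply]
    have h1 : ∀ a b : WithLp 2 (ℂ × ℂ), (a + b).ofLp.1 = a.ofLp.1 + b.ofLp.1 := fun _ _ => rfl
    have h2 : ∀ a b : WithLp 2 (ℂ × ℂ), (a + b).ofLp.2 = a.ofLp.2 + b.ofLp.2 := fun _ _ => rfl
    have hsymm : ∀ x : ℂ × ℂ, (WithLp.toLp 2 x).ofLp = x := fun _ => rfl
    simp only [h1, h2, hsymm, map_add, map_mul, map_neg, map_zero,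
      Complex.conj_conj, hcsa, hcsb, zero_add, ← hsa_def, ← hsb_def,
      Complex.conj_ofReal]
    linear_combination ((starRingEnd ℂ) β * β * (starRingEnd ℂ) z * w
        - (starRingEnd ℂ) β * sb * (starRingEnd ℂ) z * k.ofLp.2
        + (starRingEnd ℂ) h.ofLp.1 * k.ofLp.1
        - β * sb * (starRingEnd ℂ) h.ofLp.2 * w
        + sb * sb * (starRingEnd ℂ) h.ofLp.2 * k.ofLp.2) * hsa
      + ((starRingEnd ℂ) z * w + (starRingEnd ℂ) h.ofLp.2 * k.ofLp.2) * hsb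
  · rintro ⟨z₁, z₂⟩ hz
    obtain ⟨hz1, hz2⟩ : ‖z₁‖ < 1 ∧ ‖z₂‖ < 1 := by
      simpa [biDisc, Metric.mem_ball, dist_zero_right] using hz
    set sa : ℂ := ((Real.sqrt (1 - ‖α‖ ^ 2) : ℝ) : ℂ) with hsa_def
    set sb : ℂ := ((Real.sqrt (1 - ‖β‖ ^ 2) : ℝ) : ℂ) with hsb_def
    have hsa : sa * sa = 1 - (starRingEnd ℂ) α * α := by
      rw [hsa_def, ← Complex.ofReal_mul, Real.mul_self_sqrt (by nlinarith [norm_nonneg α]),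
        Complex.conj_mul']; push_cast; ring
    have hsb : sb * sb = 1 - (starRingEnd ℂ) β * β := by
      rw [hsb_def, ← Complex.ofReal_mul, Real.mul_self_sqrt (by nlinarith [norm_nonneg β]),
        Complex.conj_mul']; push_cast; ring
    have hu : (1 : ℂ) - (starRingEnd ℂ) α * z₁ ≠ 0 := nz α z₁ hα hz1
    have hv : (1 : ℂ) - (starRingEnd ℂ) β * z₂ ≠ 0 := nz β z₂ hβ hz2
    set u : ℂ := 1 - (starRingEnd ℂ) α * z₁ with hu_def
    set v : ℂ := 1 - (starRingEnd ℂ) β * z₂ with hv_def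
    set N : WithLp 2 (ℂ × ℂ) →L[ℂ] WithLp 2 (ℂ × ℂ) :=
      blockD (u⁻¹ • ContinuousLinearMap.id ℂ ℂ) ((u⁻¹ * (z₁ * (sa * sb)) * v⁻¹) • ContinuousLinearMap.id ℂ ℂ)
        0 (v⁻¹ • ContinuousLinearMap.id ℂ ℂ) with hN
    set M : WithLp 2 (ℂ × ℂ) →L[ℂ] WithLp 2 (ℂ × ℂ) :=
      1 - (diag2 (z₁, z₂)).comp
        (blockD (((starRingEnd ℂ) α) • ContinuousLinearMap.id ℂ ℂ)
          ((((Real.sqrt (1 - ‖α‖ ^ 2) * Real.sqrt (1 - ‖β‖ ^ 2) : ℝ)) : ℂ) • ContinuousLinearMap.id ℂ ℂ)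
          0 (((starRingEnd ℂ) β) • ContinuousLinearMap.id ℂ ℂ)) with hM
    have happ : ∀ x : WithLp 2 (ℂ × ℂ), M x = WithLp.toLp 2 (u * x.ofLp.1 - z₁ * (sa * sb) * x.ofLp.2, v * x.ofLp.2) := by
      intro x
      simp only [hM, blockD, diag2, sub_apply, one_apply_eq_self, comp_apply, smul_comp, id_comp,
        coe_comp', ContinuousLinearEquiv.coe_coe, WithLp.prodContinuousLinearEquiv_symm_apply,
        WithLp.prodContinuousLinearEquiv_apply, Function.comp_apply, prod_apply, add_apply,
        coe_smul', coe_fst', Pi.smul_apply, smul_eq_mul, coe_snd',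
        zero_apply, coe_id', id_eq, Pi.zero_apply, zero_comp, FunLike.coe_zero]
      have hsymm : ∀ y : ℂ × ℂ, (WithLp.toLp 2 y).ofLp = y := fun _ => rfl
      have hs : ∀ a b : WithLp 2 (ℂ × ℂ), a - b = WithLp.toLp 2 (a.ofLp.1 - b.ofLp.1, a.ofLp.2 - b.ofLp.2) := fun _ _ => rfl
      rw [hs]
      simp only [hsymm, ← hsa_def, ← hsb_def, Complex.ofReal_mul, hu_def, hv_def]
      refine (WithLp.ext_iff 2).2 (Prod.ext ?_ ?_) <;> simp only <;> ring
    have hNapp : ∀ x : WithLp 2 (ℂ × ℂ),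
        N x = WithLp.toLp 2 (u⁻¹ * x.ofLp.1 + u⁻¹ * (z₁ * (sa * sb)) * v⁻¹ * x.ofLp.2, v⁻¹ * x.ofLp.2) := by
      intro x
      simp only [hN, blockD, coe_comp', ContinuousLinearEquiv.coe_coe,
        WithLp.prodContinuousLinearEquiv_symm_apply, WithLp.prodContinuousLinearEquiv_apply,
        Function.comp_apply, prod_apply, add_apply, coe_smul', coe_fst', Pi.smul_apply,
        smul_eq_mul, coe_snd', zero_apply, smul_comp,
        id_comp, coe_id', id_eq, zero_comp, FunLike.coe_zero, Pi.zero_apply, zero_add]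
    have hinv : Ring.inverse M = N := by
      apply myinv
      · refine ContinuousLinearMap.ext fun x => ?_
        rw [ContinuousLinearMap.mul_apply, ContinuousLinearMap.one_apply, hNapp, happ]
        refine (WithLp.ext_iff 2).2 (Prod.ext ?_ ?_) <;> simp only <;> field_simp <;> ring
      · refine ContinuousLinearMap.ext fun x => ?_
        rw [ContinuousLinearMap.mul_apply, ContinuousLinearMap.one_apply, happ, hNapp]
        refine (WithLp.ext_iff 2).2 (Prod.ext ?_ ?_) <;> simp only <;> field_simp <;> ring
    rw [transfer2, hinv]
    have hsymm : ∀ y : ℂ × ℂ, (WithLp.toLp 2 y).ofLp = y := fun _ => rfl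
    simp only [rowB, colC, diag2, blockD, coe_comp', ContinuousLinearEquiv.coe_coe,
      WithLp.prodContinuousLinearEquiv_symm_apply, WithLp.prodContinuousLinearEquiv_apply,
      Function.comp_apply, prod_apply, add_apply, coe_smul', coe_fst', Pi.smul_apply,
      smul_eq_mul, coe_snd', zero_apply, smul_comp,
      id_comp, coe_id', id_eq, zero_comp, FunLike.coe_zero, Pi.zero_apply, zero_add, add_zero,
      hsymm, mul_one]
    rw [hNapp]
    simp only [hsymm, ← hsa_def, ← hsb_def, Complex.ofReal_mul]
    field_simp
    linear_combination (1) * ((-(z₁*β*v) + z₁*z₂*(sb*sb)) * hsa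
      + (z₁*z₂*(1 - (starRingEnd ℂ) α * α) - α*z₂*u) * hsb)
end
end
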